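/- Let τ be a doubly torqued vector field on an n-dimensional pseudo-Riemannian manifold. Then the Ricci tensor satisfies R_{km} τ^m = −(n−1)∇_k κ + κ(n α_k + β_k) + τ^j ∇_j α_k + τ_k(α^j β_j + ∇_j β^j). -/

import Mathlib

open scoped BigOperators
open Finset

noncomputable section

/-- Pointwise data of a pseudo-Riemannian manifold of dimension `n` in local index
notation: metric `g`, inverse metric `ginv`, Levi-Civita covariant derivative acting
on scalars (`Ds`), one-forms (`Dv`) and (0,2)-tensors (`Dt`), and the Riemann tensor
`Riem` (all lower indices, `Riem x j k l m = R_{jklm}`), together with the standard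
properties of the Levi-Civita connection and its curvature. -/
structure PseudoRiemannData (M : Type*) (n : ℕ) where
  g : M → Fin n → Fin n → ℝ
  ginv : M → Fin n → Fin n → ℝ
  g_symm : ∀ x i j, g x i j = g x j i
  ginv_symm : ∀ x i j, ginv x i j = ginv x j i
  g_ginv : ∀ x i j, (∑ k, g x i k * ginv x k j) = (if i = j then (1:ℝ) else 0)
  /-- covariant derivative (gradient) of a scalar -/
  Ds : (M → ℝ) → M → Fin n → ℝ
  /-- covariant derivative of a one-form: `Dv σ x j k = ∇_j σ_k` -/
  Dv : (M → Fin n → ℝ) → M → Fin n → Fin n → ℝ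
  /-- covariant derivative of a (0,2)-tensor: `Dt S x i j k = ∇_i S_{jk}` -/
  Dt : (M → Fin n → Fin n → ℝ) → M → Fin n → Fin n → Fin n → ℝ
  /-- Riemann curvature tensor, all indices down -/
  Riem : M → Fin n → Fin n → Fin n → Fin n → ℝ
  Ds_add : ∀ f h : M → ℝ, Ds (fun x => f x + h x) = fun x i => Ds f x i + Ds h x i
  Ds_mul : ∀ f h : M → ℝ, Ds (fun x => f x * h x) = fun x i => f x * Ds h x i + h x * Ds f x i
  Dv_add : ∀ σ ρ : M → Fin n → ℝ,
    Dv (fun x k => σ x k + ρ x k) = fun x j k => Dv σ x j k + Dv ρ x j k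
  Dv_smul : ∀ (f : M → ℝ) (σ : M → Fin n → ℝ),
    Dv (fun x k => f x * σ x k) = fun x j k => Ds f x j * σ x k + f x * Dv σ x j k
  /-- torsion-freeness: second covariant derivatives of scalars are symmetric -/
  hessian_symm : ∀ (f : M → ℝ) (x : M) (i j : Fin n), Dv (Ds f) x i j = Dv (Ds f) x j i
  Dt_add : ∀ S T : M → Fin n → Fin n → ℝ,
    Dt (fun x j k => S x j k + T x j k) = fun x i j k => Dt S x i j k + Dt T x i j k
  Dt_tensor : ∀ σ ρ : M → Fin n → ℝ,
    Dt (fun x j k => σ x j * ρ x k) = fun x i j k => Dv σ x i j * ρ x k + σ x j * Dv ρ x i k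
  /-- metric compatibility: `∇ (κ g) = (∇κ) g` -/
  Dt_scalar_g : ∀ κ : M → ℝ,
    Dt (fun x j k => κ x * g x j k) = fun x i j k => Ds κ x i * g x j k
  riem_antisym1 : ∀ x j k l m, Riem x j k l m = - Riem x k j l m
  riem_antisym2 : ∀ x j k l m, Riem x j k l m = - Riem x j k m l
  riem_pairsymm : ∀ x j k l m, Riem x j k l m = Riem x l m j k
  /-- first Bianchi identity -/
  bianchi1 : ∀ x j k l m, Riem x j k l m + Riem x k l j m + Riem x l j k m = 0
  /-- Ricci identity: `(∇_j ∇_k − ∇_k ∇_j) σ_l = R_{jkl}{}^m σ_m = R_{jklm} σ^m` -/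
  ricci_identity : ∀ (σ : M → Fin n → ℝ) (x : M) (j k l : Fin n),
    Dt (Dv σ) x j k l - Dt (Dv σ) x k j l
      = ∑ m, Riem x j k l m * (∑ p, ginv x m p * σ x p)

namespace PseudoRiemannData

variable {M : Type*} {n : ℕ} (P : PseudoRiemannData M n)

/-- raising an index: `τ^i = g^{ij} τ_j` -/
def up (τ : M → Fin n → ℝ) (x : M) (i : Fin n) : ℝ := ∑ j, P.ginv x i j * τ x j

/-- scalar product of two one-forms: `σ_i τ^i` -/
def inner2 (σ τ : M → Fin n → ℝ) (x : M) : ℝ := ∑ i, σ x i * P.up τ x i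

/-- Ricci tensor `R_{km} = g^{jl} R_{jklm}` -/
def Ric (x : M) (k m : Fin n) : ℝ := ∑ j, ∑ l, P.ginv x j l * P.Riem x j k l m

/-- scalar curvature -/
def Scal (x : M) : ℝ := ∑ k, ∑ m, P.ginv x k m * P.Ric x k m

/-- `τ` is doubly torqued with data `(κ, α, β)`:
`∇_j τ_k = κ g_{jk} + α_j τ_k + τ_j β_k` with `α_k τ^k = 0` and `β_k τ^k = 0`. -/
def DoublyTorqued (τ : M → Fin n → ℝ) (κ : M → ℝ) (α β : M → Fin n → ℝ) : Prop :=
  (∀ x j k, P.Dv τ x j k = κ x * P.g x j k + α x j * τ x k + τ x j * β x k)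
  ∧ (∀ x, P.inner2 α τ x = 0) ∧ (∀ x, P.inner2 β τ x = 0)

/-- Weyl conformal curvature tensor. -/
def Weyl (x : M) (j k l m : Fin n) : ℝ :=
  P.Riem x j k l m
  + (P.g x j m * P.Ric x k l - P.g x k m * P.Ric x j l
      + P.g x k l * P.Ric x j m - P.g x j l * P.Ric x k m) / ((n : ℝ) - 2)
  + P.Scal x * (P.g x j l * P.g x k m - P.g x j m * P.g x k l)
      / (((n : ℝ) - 1) * ((n : ℝ) - 2))

-- ## basics
lemma Ds_zero : P.Ds (fun _ => 0) = fun _ _ => 0 := by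
  have h := P.Ds_mul (fun _ => 0) (fun _ => 0)
  simp only [zero_mul, mul_zero, add_zero] at h
  exact h

lemma Ds_one : P.Ds (fun _ => 1) = fun _ _ => 0 := by
  have h := P.Ds_mul (fun _ => 1) (fun _ => 1)
  simp only [one_mul, mul_one] at h
  funext x i
  have := congrFun (congrFun h x) i
  linarith

lemma Ds_sum {ι : Type*} (s : Finset ι) (F : ι → M → ℝ) :
    P.Ds (fun y => ∑ m ∈ s, F m y) = fun x i => ∑ m ∈ s, P.Ds (F m) x i := by
  classical
  induction s using Finset.induction with
  | empty => simpa using P.Ds_zero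
  | insert a s' hms ih =>
      have : (fun y => ∑ m ∈ insert a s', F m y)
          = fun y => F a y + ∑ m ∈ s', F m y := by
        funext y; rw [Finset.sum_insert hms]
      rw [this, P.Ds_add, ih]
      funext x i; rw [Finset.sum_insert hms]

lemma Dv_zero : P.Dv (fun _ _ => 0) = fun _ _ _ => 0 := by
  have h := P.Dv_smul (fun _ => 0) (fun _ _ => 0)
  simp only [zero_mul, mul_zero, add_zero] at h
  exact h

lemma Dv_sum {ι : Type*} (s : Finset ι) (F : ι → M → Fin n → ℝ) :
    P.Dv (fun y k => ∑ m ∈ s, F m y k) = fun x j k => ∑ m ∈ s, P.Dv (F m) x j k := by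
  classical
  induction s using Finset.induction with
  | empty => simpa using P.Dv_zero
  | insert a s' hms ih =>
      have : (fun y k => ∑ m ∈ insert a s', F m y k)
          = fun y k => F a y k + ∑ m ∈ s', F m y k := by
        funext y k; rw [Finset.sum_insert hms]
      rw [this, P.Dv_add, ih]
      funext x j k; rw [Finset.sum_insert hms]

lemma Dt_zero : P.Dt (fun _ _ _ => 0) = fun _ _ _ _ => 0 := by
  have h := P.Dt_scalar_g (fun _ => 0)
  simp only [zero_mul] at h
  rw [h]
  funext x i j k
  have := congrFun (congrFun (P.Ds_zero) x) i
  simp [this]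

lemma Dt_sum {ι : Type*} (s : Finset ι) (F : ι → M → Fin n → Fin n → ℝ) :
    P.Dt (fun y j k => ∑ m ∈ s, F m y j k) = fun x i j k => ∑ m ∈ s, P.Dt (F m) x i j k := by
  classical
  induction s using Finset.induction with
  | empty => simpa using P.Dt_zero
  | insert a s' hms ih =>
      have : (fun y j k => ∑ m ∈ insert a s', F m y j k)
          = fun y j k => F a y j k + ∑ m ∈ s', F m y j k := by
        funext y j k; rw [Finset.sum_insert hms]
      rw [this, P.Dt_add, ih]
      funext x i j k; rw [Finset.sum_insert hms]


def Gamma (x : M) (i j m : Fin n) : ℝ :=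
  P.Dv (fun _ l => if m = l then (1:ℝ) else 0) x i j

lemma Dv_expand (σ : M → Fin n → ℝ) (x : M) (k l : Fin n) :
    P.Dv σ x k l = P.Ds (fun y => σ y l) x k + ∑ m, σ x m * P.Gamma x k l m := by
  classical
  have hσ : σ = fun y k' => ∑ m, σ y m * (if m = k' then (1:ℝ) else 0) := by
    funext y k'; simp
  calc P.Dv σ x k l
      = P.Dv (fun y k' => ∑ m, (fun z => σ z m) y * (fun _ l' => if m = l' then (1:ℝ) else 0) y k') x k l := by
        rw [← hσ]
    _ = ∑ m, P.Dv (fun y k' => (fun z => σ z m) y * (fun _ l' => if m = l' then (1:ℝ) else 0) y k') x k l := by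
        rw [P.Dv_sum]
    _ = ∑ m, (P.Ds (fun z => σ z m) x k * (if m = l then (1:ℝ) else 0) + σ x m * P.Gamma x k l m) := by
        refine Finset.sum_congr rfl fun m _ => ?_
        rw [P.Dv_smul]; rfl
    _ = P.Ds (fun y => σ y l) x k + ∑ m, σ x m * P.Gamma x k l m := by
        rw [Finset.sum_add_distrib]
        congr 1
        simp [mul_ite]

lemma Dt_expand (S : M → Fin n → Fin n → ℝ) (x : M) (i j k : Fin n) :
    P.Dt S x i j k = P.Ds (fun y => S y j k) x i
      + (∑ m, P.Gamma x i j m * S x m k) + ∑ m, P.Gamma x i k m * S x j m := by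
  classical
  have hS : S = fun y j' k' => ∑ a, ∑ b,
      (fun z j'' => S z a b * (if a = j'' then (1:ℝ) else 0)) y j'
        * (fun _ k'' => if b = k'' then (1:ℝ) else 0) y k' := by
    funext y j' k'
    simp [Finset.mul_sum, mul_ite, Finset.sum_ite_eq]
  calc P.Dt S x i j k
      = P.Dt (fun y j' k' => ∑ a, (fun z j'' k'' => ∑ b,
          (S z a b * (if a = j'' then (1:ℝ) else 0)) * (if b = k'' then (1:ℝ) else 0)) y j' k') x i j k := by
        conv_lhs => rw [hS]
    _ = ∑ a, ∑ b, P.Dt (fun z j'' k'' =>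
          (fun y j''' => S y a b * (if a = j''' then (1:ℝ) else 0)) z j''
            * (fun _ k''' => if b = k''' then (1:ℝ) else 0) z k'') x i j k := by
        rw [P.Dt_sum]
        refine Finset.sum_congr rfl fun a _ => ?_
        exact congrFun (congrFun (congrFun (congrFun (P.Dt_sum Finset.univ _) x) i) j) k
    _ = ∑ a, ∑ b,
        ((P.Ds (fun z => S z a b) x i * (if a = j then (1:ℝ) else 0) + S x a b * P.Gamma x i j a)
            * (if b = k then (1:ℝ) else 0)
          + (S x a b * (if a = j then (1:ℝ) else 0)) * P.Gamma x i k b) := by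
        refine Finset.sum_congr rfl fun a _ => Finset.sum_congr rfl fun b _ => ?_
        rw [P.Dt_tensor, P.Dv_smul]; rfl
    _ = P.Ds (fun y => S y j k) x i
      + (∑ m, P.Gamma x i j m * S x m k) + ∑ m, P.Gamma x i k m * S x j m := by
        simp only [add_mul, Finset.sum_add_distrib]
        congr 1
        · congr 1
          · simp [mul_ite, Finset.sum_ite_eq]
          · -- ∑ a ∑ b (S a b * Γ i j a) * ite (b = k) = ∑ m Γ i j m * S m k
            simp only [mul_ite, mul_one, mul_zero, ite_mul, zero_mul]
            rw [Finset.sum_comm]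
            simp [Finset.sum_ite_eq, mul_comm]
        · simp only [mul_ite, mul_one, mul_zero, ite_mul, zero_mul]
          simp [Finset.sum_ite_eq, mul_comm]


-- δ-contraction helpers
lemma gg (x : M) (a p : Fin n) :
    ∑ c, P.ginv x a c * P.g x c p = if p = a then (1:ℝ) else 0 := by
  rw [← P.g_ginv x p a]
  refine Finset.sum_congr rfl fun c _ => ?_
  rw [P.ginv_symm, P.g_symm]; ring

lemma Dtg_zero : P.Dt P.g = fun _ _ _ _ => 0 := by
  have h := P.Dt_scalar_g (fun _ => 1)
  simp only [one_mul] at h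
  rw [h]; funext x i j k
  rw [congrFun (congrFun P.Ds_one x) i]; simp

lemma Ds_g (x : M) (i j k : Fin n) :
    P.Ds (fun y => P.g y j k) x i
      = -(∑ m, P.Gamma x i j m * P.g x m k) - ∑ m, P.Gamma x i k m * P.g x j m := by
  have h := P.Dt_expand P.g x i j k
  rw [congrFun (congrFun (congrFun (congrFun P.Dtg_zero x) i) j) k] at h
  linarith

lemma Ds_ginv (x : M) (i a b : Fin n) :
    P.Ds (fun y => P.ginv y a b) x i
      = (∑ m, P.ginv x a m * P.Gamma x i m b) + ∑ m, P.ginv x m b * P.Gamma x i m a := by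
  classical
  -- first: ∑_m g_{cm} Ds ginv_{mb} = −∑_m ginv_{mb} Ds g_{cm}
  have hδ : ∀ c : Fin n, (∑ m, P.g x c m * P.Ds (fun y => P.ginv y m b) x i)
      = - ∑ m, P.ginv x m b * P.Ds (fun y => P.g y c m) x i := by
    intro c
    have h0 : P.Ds (fun y => ∑ m, P.g y c m * P.ginv y m b) x i = 0 := by
      have : (fun y => ∑ m, P.g y c m * P.ginv y m b) = fun _ => if c = b then (1:ℝ) else 0 := by
        funext y; exact P.g_ginv y c b
      rw [this]
      by_cases hcb : c = b
      · simp only [hcb, if_pos rfl]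
        exact congrFun (congrFun P.Ds_one x) i
      · simp only [if_neg hcb]
        exact congrFun (congrFun P.Ds_zero x) i
    have h1 := congrFun (congrFun (P.Ds_sum (Finset.univ)
      (fun m y => P.g y c m * P.ginv y m b)) x) i
    rw [h1] at h0
    have h2 : ∀ m : Fin n, P.Ds (fun y => P.g y c m * P.ginv y m b) x i
        = P.g x c m * P.Ds (fun y => P.ginv y m b) x i
          + P.ginv x m b * P.Ds (fun y => P.g y c m) x i := by
      intro m
      have := congrFun (congrFun (P.Ds_mul (fun y => P.g y c m) (fun y => P.ginv y m b)) x) i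
      simpa using this
    rw [Finset.sum_congr rfl (fun m _ => h2 m), Finset.sum_add_distrib] at h0
    linarith
  set D : Fin n → ℝ := fun m => P.Ds (fun y => P.ginv y m b) x i with hD
  have key : D a = ∑ c, P.ginv x a c * ∑ m, P.g x c m * D m := by
    have h1 : D a = ∑ m, (∑ c, P.ginv x a c * P.g x c m) * D m := by
      have : ∀ m : Fin n, (∑ c, P.ginv x a c * P.g x c m) * D m
          = (if m = a then D m else 0) := by
        intro m; rw [P.gg]; split <;> simp
      rw [Finset.sum_congr rfl fun m _ => this m, Finset.sum_ite_eq' Finset.univ a D]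
      simp
    rw [h1]
    simp only [Finset.sum_mul, Finset.mul_sum]
    rw [Finset.sum_comm]
    exact Finset.sum_congr rfl fun c _ => Finset.sum_congr rfl fun m _ => by ring
  show D a = _
  rw [key, Finset.sum_congr rfl fun c _ => congrArg (P.ginv x a c * ·) (hδ c)]
  -- now substitute Ds_g
  have h3 : ∀ c : Fin n, P.ginv x a c *
      -(∑ m, P.ginv x m b * P.Ds (fun y => P.g y c m) x i)
      = (∑ m, P.ginv x a c * P.ginv x m b * (∑ p, P.Gamma x i c p * P.g x p m))
        + ∑ m, P.ginv x a c * P.ginv x m b * (∑ p, P.Gamma x i m p * P.g x c p) := by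
    intro c
    rw [← Finset.sum_add_distrib, ← Finset.sum_neg_distrib, Finset.mul_sum]
    refine Finset.sum_congr rfl fun m _ => ?_
    rw [P.Ds_g]
    ring
  rw [Finset.sum_congr rfl fun c _ => h3 c, Finset.sum_add_distrib]
  congr 1
  · -- ∑_c ∑_m ginv_{ac} ginv_{mb} ∑_p Γ_{icp} g_{pm}  = ∑_m ginv_{am} Γ_{imb}
    have : ∀ c : Fin n, (∑ m, P.ginv x a c * P.ginv x m b * (∑ p, P.Gamma x i c p * P.g x p m))
        = P.ginv x a c * P.Gamma x i c b := by
      intro c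
      have swap : (∑ m, P.ginv x a c * P.ginv x m b * (∑ p, P.Gamma x i c p * P.g x p m))
          = ∑ p, P.Gamma x i c p * (P.ginv x a c * ∑ m, P.g x p m * P.ginv x m b) := by
        simp only [Finset.mul_sum, Finset.sum_mul]
        rw [Finset.sum_comm]
        exact Finset.sum_congr rfl fun p _ => Finset.sum_congr rfl fun m _ => by ring
      rw [swap]
      have : ∀ p : Fin n, P.Gamma x i c p * (P.ginv x a c * ∑ m, P.g x p m * P.ginv x m b)
          = if p = b then P.Gamma x i c p * P.ginv x a c else 0 := by
        intro p; rw [P.g_ginv]; split <;> simp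
      rw [Finset.sum_congr rfl fun p _ => this p,
        Finset.sum_ite_eq' Finset.univ b (fun p => P.Gamma x i c p * P.ginv x a c)]
      simp [mul_comm]
    rw [Finset.sum_congr rfl fun c _ => this c]
  · -- ∑_c ∑_m ginv_{ac} ginv_{mb} ∑_p Γ_{imp} g_{cp} = ∑_m ginv_{mb} Γ_{ima}
    rw [Finset.sum_comm]
    refine Finset.sum_congr rfl fun m _ => ?_
    have swap : (∑ c, P.ginv x a c * P.ginv x m b * (∑ p, P.Gamma x i m p * P.g x c p))
        = ∑ p, P.Gamma x i m p * (P.ginv x m b * ∑ c, P.ginv x a c * P.g x c p) := by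
      simp only [Finset.mul_sum, Finset.sum_mul]
      rw [Finset.sum_comm]
      exact Finset.sum_congr rfl fun p _ => Finset.sum_congr rfl fun c _ => by ring
    rw [swap]
    have : ∀ p : Fin n, P.Gamma x i m p * (P.ginv x m b * ∑ c, P.ginv x a c * P.g x c p)
        = if p = a then P.Gamma x i m p * P.ginv x m b else 0 := by
      intro p; rw [P.gg]; split <;> simp
    rw [Finset.sum_congr rfl fun p _ => this p,
      Finset.sum_ite_eq' Finset.univ a (fun p => P.Gamma x i m p * P.ginv x m b)]
    simp [mul_comm]


lemma sum3_rot (f : Fin n → Fin n → Fin n → ℝ) :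
    (∑ i, ∑ j, ∑ a, f i j a) = ∑ a : Fin n, ∑ i, ∑ j, f i j a := by
  rw [show (∑ i, ∑ j, ∑ a, f i j a) = ∑ i, ∑ a : Fin n, ∑ j, f i j a from
    Finset.sum_congr rfl fun i _ => Finset.sum_comm]
  exact Finset.sum_comm

/-- Leibniz rule for the scalar `σ_i g^{ij} ρ_j` : the covariant derivative commutes
with raising/contraction. -/
lemma raise_leibniz (σ ρ : M → Fin n → ℝ) (x : M) (k : Fin n) :
    P.Ds (P.inner2 σ ρ) x k
      = ∑ j, (P.up ρ x j * P.Dv σ x k j + P.up σ x j * P.Dv ρ x k j) := by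
  classical
  have h0 : P.inner2 σ ρ = fun y => ∑ i, ∑ j,
      (fun z => σ z i) y * ((fun z => P.ginv z i j * ρ z j) y) := by
    funext y; unfold inner2 up; simp [Finset.mul_sum]
  have hL : P.Ds (P.inner2 σ ρ) x k
      = ∑ i, ∑ j, (σ x i * (P.ginv x i j * P.Ds (fun y => ρ y j) x k
            + ρ x j * P.Ds (fun y => P.ginv y i j) x k)
          + (P.ginv x i j * ρ x j) * P.Ds (fun y => σ y i) x k) := by
    rw [h0]
    rw [congrFun (congrFun (P.Ds_sum Finset.univ _) x) k]
    refine Finset.sum_congr rfl fun i _ => ?_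
    rw [congrFun (congrFun (P.Ds_sum Finset.univ _) x) k]
    refine Finset.sum_congr rfl fun j _ => ?_
    rw [congrFun (congrFun (P.Ds_mul _ _) x) k]
    rw [congrFun (congrFun (P.Ds_mul _ _) x) k]
  have hL2 : P.Ds (P.inner2 σ ρ) x k
      = (∑ i, ∑ j, P.ginv x i j * ρ x j * P.Ds (fun y => σ y i) x k)
        + ((∑ i, ∑ j, σ x i * P.ginv x i j * P.Ds (fun y => ρ y j) x k)
        + ((∑ i, ∑ j, ∑ a, σ x i * ρ x j * (P.ginv x a j * P.Gamma x k a i))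
        + (∑ i, ∑ j, ∑ a, σ x i * ρ x j * (P.ginv x i a * P.Gamma x k a j)))) := by
    rw [hL]
    rw [← Finset.sum_add_distrib, ← Finset.sum_add_distrib, ← Finset.sum_add_distrib]
    refine Finset.sum_congr rfl fun i _ => ?_
    rw [← Finset.sum_add_distrib, ← Finset.sum_add_distrib, ← Finset.sum_add_distrib]
    refine Finset.sum_congr rfl fun j _ => ?_
    rw [P.Ds_ginv]
    have e : σ x i * (ρ x j * ((∑ a, P.ginv x i a * P.Gamma x k a j)
          + ∑ a, P.ginv x a j * P.Gamma x k a i))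
        = (∑ a, σ x i * ρ x j * (P.ginv x a j * P.Gamma x k a i))
          + ∑ a, σ x i * ρ x j * (P.ginv x i a * P.Gamma x k a j) := by
      rw [mul_add, mul_add, Finset.mul_sum, Finset.mul_sum, Finset.mul_sum, Finset.mul_sum]
      rw [add_comm]
      exact congrArg₂ (· + ·) (Finset.sum_congr rfl fun a _ => by ring)
        (Finset.sum_congr rfl fun a _ => by ring)
    rw [mul_add, e]
    ring
  rw [hL2]
  have A : ∀ j : Fin n, (∑ i, P.ginv x j i * ρ x i) * P.Ds (fun y => σ y j) x k
      = ∑ i, P.ginv x j i * ρ x i * P.Ds (fun y => σ y j) x k := fun j => Finset.sum_mul _ _ _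
  have B : ∀ j : Fin n, (∑ i, P.ginv x j i * σ x i) * P.Ds (fun y => ρ y j) x k
      = ∑ i, P.ginv x j i * σ x i * P.Ds (fun y => ρ y j) x k := fun j => Finset.sum_mul _ _ _
  have C : ∀ j : Fin n, (∑ i, P.ginv x j i * ρ x i) * (∑ m, σ x m * P.Gamma x k j m)
      = ∑ i, ∑ m, P.ginv x j i * ρ x i * (σ x m * P.Gamma x k j m) := by
    intro j
    rw [Finset.sum_mul]
    exact Finset.sum_congr rfl fun i _ => Finset.mul_sum _ _ _
  have D : ∀ j : Fin n, (∑ i, P.ginv x j i * σ x i) * (∑ m, ρ x m * P.Gamma x k j m)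
      = ∑ i, ∑ m, P.ginv x j i * σ x i * (ρ x m * P.Gamma x k j m) := by
    intro j
    rw [Finset.sum_mul]
    exact Finset.sum_congr rfl fun i _ => Finset.mul_sum _ _ _
  have hR : ∑ j, (P.up ρ x j * P.Dv σ x k j + P.up σ x j * P.Dv ρ x k j)
      = (∑ j, ∑ i, P.ginv x j i * ρ x i * P.Ds (fun y => σ y j) x k)
        + ((∑ j, ∑ i, P.ginv x j i * σ x i * P.Ds (fun y => ρ y j) x k)
        + ((∑ j, ∑ i, ∑ m, P.ginv x j i * ρ x i * (σ x m * P.Gamma x k j m))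
        + (∑ j, ∑ i, ∑ m, P.ginv x j i * σ x i * (ρ x m * P.Gamma x k j m)))) := by
    rw [← Finset.sum_add_distrib, ← Finset.sum_add_distrib, ← Finset.sum_add_distrib]
    refine Finset.sum_congr rfl fun j _ => ?_
    rw [P.Dv_expand σ x k j, P.Dv_expand ρ x k j]
    unfold up
    rw [mul_add, mul_add, A j, B j, C j, D j]
    ring
  rw [hR]
  refine congrArg₂ (· + ·) ?_ (congrArg₂ (· + ·) ?_ (congrArg₂ (· + ·) ?_ ?_))
  · rfl
  · rw [Finset.sum_comm]
    refine Finset.sum_congr rfl fun u _ => Finset.sum_congr rfl fun v _ => ?_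
    rw [P.ginv_symm x v u]
    ring
  · rw [sum3_rot]
    refine Finset.sum_congr rfl fun a _ => ?_
    rw [Finset.sum_comm]
    exact Finset.sum_congr rfl fun u _ => Finset.sum_congr rfl fun v _ => by ring
  · rw [sum3_rot]
    refine Finset.sum_congr rfl fun a _ => Finset.sum_congr rfl fun u _ =>
      Finset.sum_congr rfl fun v _ => ?_
    rw [P.ginv_symm x u a]
    ring


lemma inner2_symm (u v : M → Fin n → ℝ) (x : M) :
    P.inner2 u v x = P.inner2 v u x := by
  unfold inner2 up
  rw [Finset.sum_congr rfl fun i (_ : i ∈ Finset.univ) => Finset.mul_sum _ _ _,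
    Finset.sum_comm]
  rw [Finset.sum_congr rfl fun i (_ : i ∈ Finset.univ) => (Finset.mul_sum _ _ _ : v x i * _ = _)]
  refine Finset.sum_congr rfl fun i _ => Finset.sum_congr rfl fun j _ => ?_
  rw [P.ginv_symm x j i]; ring

lemma up_dot (u v : M → Fin n → ℝ) (x : M) :
    ∑ j, P.up u x j * v x j = P.inner2 v u x := by
  unfold inner2
  exact Finset.sum_congr rfl fun j _ => mul_comm _ _

/-- `τ^j ∇_k σ_j = −σ^j ∇_k τ_j` whenever `σ_j τ^j = 0`, and then evaluation using the
doubly torqued equation. -/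
lemma torqued_contract (τ : M → Fin n → ℝ) (κ : M → ℝ) (α β : M → Fin n → ℝ)
    (h : P.DoublyTorqued τ κ α β) (σ : M → Fin n → ℝ)
    (hσ : ∀ y, P.inner2 σ τ y = 0) (x : M) (k : Fin n) :
    ∑ j, P.up τ x j * P.Dv σ x k j
      = -(κ x * σ x k) - τ x k * ∑ j, P.up σ x j * β x j := by
  have h0 : P.Ds (P.inner2 σ τ) x k = 0 := by
    have : P.inner2 σ τ = fun _ => 0 := funext hσ
    rw [this, congrFun (congrFun P.Ds_zero x) k]
  have h1 := P.raise_leibniz σ τ x k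
  rw [h0, Finset.sum_add_distrib] at h1
  have h2 : ∑ j, P.up σ x j * P.Dv τ x k j
      = κ x * σ x k + τ x k * ∑ j, P.up σ x j * β x j := by
    have e : ∀ j : Fin n, P.up σ x j * P.Dv τ x k j
        = κ x * (P.up σ x j * P.g x k j) + α x k * (P.up σ x j * τ x j)
          + τ x k * (P.up σ x j * β x j) := by
      intro j; rw [h.1]; ring
    rw [Finset.sum_congr rfl fun j _ => e j, Finset.sum_add_distrib, Finset.sum_add_distrib,
      ← Finset.mul_sum, ← Finset.mul_sum, ← Finset.mul_sum]
    have lower : ∑ j, P.up σ x j * P.g x k j = σ x k := by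
      unfold up
      rw [Finset.sum_congr rfl fun j (_ : j ∈ Finset.univ) => Finset.sum_mul _ _ _,
        Finset.sum_comm]
      have : ∀ i : Fin n, (∑ j, P.ginv x j i * σ x i * P.g x k j)
          = if i = k then σ x i else 0 := by -- ite orientation i = k
        intro i
        have : ∀ j : Fin n, P.ginv x j i * σ x i * P.g x k j
            = σ x i * (P.ginv x i j * P.g x j k) := by
          intro j; rw [P.ginv_symm x j i, P.g_symm x k j]; ring
        rw [Finset.sum_congr rfl fun j _ => this j, ← Finset.mul_sum, P.gg]
        rcases eq_or_ne i k with h' | h'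
        · simp [h']
        · simp [h', Ne.symm h']
      rw [Finset.sum_congr rfl fun i _ => this i,
        Finset.sum_ite_eq' Finset.univ k (fun i => σ x i)]
      simp
    rw [lower, P.up_dot, P.inner2_symm, hσ x]
    ring
  linarith [h1, h2]


lemma contrA (x : M) (k : Fin n) (v : Fin n → ℝ) :
    ∑ j, ∑ l, P.ginv x j l * (v j * P.g x k l) = v k := by
  have e : ∀ j : Fin n, (∑ l, P.ginv x j l * (v j * P.g x k l))
      = if k = j then v j else 0 := by
    intro j
    have : ∀ l : Fin n, P.ginv x j l * (v j * P.g x k l)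
        = v j * (P.ginv x j l * P.g x l k) := by
      intro l; rw [P.g_symm x k l]; ring
    rw [Finset.sum_congr rfl fun l _ => this l, ← Finset.mul_sum, P.gg]
    rcases eq_or_ne k j with h' | h'
    · simp [h']
    · simp [h']
  rw [Finset.sum_congr rfl fun j _ => e j, Finset.sum_ite_eq Finset.univ k v]
  simp

lemma contrB (x : M) : ∑ j, ∑ l, P.ginv x j l * P.g x j l = (n : ℝ) := by
  have e : ∀ j : Fin n, (∑ l, P.ginv x j l * P.g x j l) = 1 := by
    intro j
    have : ∀ l : Fin n, P.ginv x j l * P.g x j l = P.ginv x j l * P.g x l j := by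
      intro l; rw [P.g_symm x j l]
    rw [Finset.sum_congr rfl fun l _ => this l, P.gg]
    simp
  rw [Finset.sum_congr rfl fun j _ => e j]
  simp

lemma contrC (x : M) (u : M → Fin n → ℝ) (w : Fin n → ℝ) :
    ∑ j, ∑ l, P.ginv x j l * (u x l * w j) = ∑ j, P.up u x j * w j := by
  refine Finset.sum_congr rfl fun j _ => ?_
  rw [show P.up u x j = ∑ l, P.ginv x j l * u x l from rfl, Finset.sum_mul]
  exact Finset.sum_congr rfl fun l _ => by ring

lemma contrD (x : M) (u : M → Fin n → ℝ) (v : Fin n → ℝ) :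
    ∑ j, ∑ l, P.ginv x j l * (u x j * v l) = ∑ l, P.up u x l * v l := by
  rw [Finset.sum_comm]
  refine Finset.sum_congr rfl fun l _ => ?_
  rw [show P.up u x l = ∑ j, P.ginv x l j * u x j from rfl, Finset.sum_mul]
  refine Finset.sum_congr rfl fun j _ => ?_
  rw [P.ginv_symm x l j]; ring

lemma Dt_Dv_torqued (τ : M → Fin n → ℝ) (κ : M → ℝ) (α β : M → Fin n → ℝ)
    (h : P.DoublyTorqued τ κ α β) (x : M) (i j k : Fin n) :
    P.Dt (P.Dv τ) x i j k
      = P.Ds κ x i * P.g x j k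
        + (P.Dv α x i j * τ x k + α x j * P.Dv τ x i k)
        + (P.Dv τ x i j * β x k + τ x j * P.Dv β x i k) := by
  have hτ : P.Dv τ = fun y j' k' => (κ y * P.g y j' k')
      + ((α y j' * τ y k') + (τ y j' * β y k')) := by
    funext y j' k'; rw [h.1]; ring
  calc P.Dt (P.Dv τ) x i j k
      = P.Dt (fun y j' k' => (κ y * P.g y j' k')
          + ((α y j' * τ y k') + (τ y j' * β y k'))) x i j k := by rw [hτ]
    _ = P.Dt (fun y j' k' => κ y * P.g y j' k') x i j k
        + (P.Dt (fun y j' k' => α y j' * τ y k') x i j k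
          + P.Dt (fun y j' k' => τ y j' * β y k') x i j k) := by
        rw [P.Dt_add, P.Dt_add]
    _ = P.Ds κ x i * P.g x j k
        + (P.Dv α x i j * τ x k + α x j * P.Dv τ x i k)
        + (P.Dv τ x i j * β x k + τ x j * P.Dv β x i k) := by
        rw [P.Dt_scalar_g, P.Dt_tensor, P.Dt_tensor]
        ring

end PseudoRiemannData

variable {M : Type*} {n : ℕ}

/-- the Ricci contraction of the integrability condition:
`R_{km} τ^m = −(n−1)∇_k κ + κ(n α_k + β_k) + τ^j ∇_j α_k + τ_k (α^j β_j + ∇_j β^j)`. -/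
theorem ricci_contraction (P : PseudoRiemannData M n)
    (τ : M → Fin n → ℝ) (κ : M → ℝ) (α β : M → Fin n → ℝ)
    (h : P.DoublyTorqued τ κ α β) :
    ∀ (x : M) (k : Fin n),
      (∑ m, P.Ric x k m * P.up τ x m)
        = -((n : ℝ) - 1) * P.Ds κ x k + κ x * ((n : ℝ) * α x k + β x k)
          + (∑ j, P.up τ x j * P.Dv α x j k)
          + τ x k * ((∑ j, P.up α x j * β x j)
              + ∑ j, ∑ l, P.ginv x j l * P.Dv β x j l) := by
  intro x k
  have step1 : (∑ m, P.Ric x k m * P.up τ x m)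
      = ∑ j, ∑ l, P.ginv x j l * (P.Dt (P.Dv τ) x j k l - P.Dt (P.Dv τ) x k j l) := by
    have e1 : ∀ m : Fin n, P.Ric x k m * P.up τ x m
        = ∑ j, ∑ l, P.ginv x j l * (P.Riem x j k l m * P.up τ x m) := by
      intro m
      show (∑ j, ∑ l, P.ginv x j l * P.Riem x j k l m) * P.up τ x m = _
      rw [Finset.sum_mul]
      refine Finset.sum_congr rfl fun j _ => ?_
      rw [Finset.sum_mul]
      exact Finset.sum_congr rfl fun l _ => by ring
    rw [Finset.sum_congr rfl fun m _ => e1 m, PseudoRiemannData.sum3_rot, PseudoRiemannData.sum3_rot]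
    refine Finset.sum_congr rfl fun j _ => Finset.sum_congr rfl fun l _ => ?_
    rw [← Finset.mul_sum, P.ricci_identity τ x j k l]; rfl
  have hexp : ∀ j l : Fin n,
      P.ginv x j l * (P.Dt (P.Dv τ) x j k l - P.Dt (P.Dv τ) x k j l)
        = P.ginv x j l * (P.Ds κ x j * P.g x k l)
          + P.ginv x j l * (τ x l * P.Dv α x j k)
          + (κ x * α x k) * (P.ginv x j l * P.g x j l)
          + β x k * (P.ginv x j l * (τ x j * β x l))
          + τ x k * (P.ginv x j l * P.Dv β x j l)
          - P.Ds κ x k * (P.ginv x j l * P.g x j l)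
          - P.ginv x j l * (τ x l * P.Dv α x k j)
          - κ x * (P.ginv x j l * (α x j * P.g x k l))
          - τ x k * (P.ginv x j l * (β x j * β x l))
          - P.ginv x j l * (τ x j * P.Dv β x k l) := by
    intro j l
    rw [P.Dt_Dv_torqued τ κ α β h x j k l, P.Dt_Dv_torqued τ κ α β h x k j l,
      h.1 x j l, h.1 x k l, h.1 x j k, h.1 x k j, P.g_symm x k j]
    ring
  rw [step1, Finset.sum_congr rfl fun j _ => Finset.sum_congr rfl fun l _ => hexp j l]
  simp only [Finset.sum_add_distrib, Finset.sum_sub_distrib, ← Finset.mul_sum]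
  rw [P.contrA x k (fun j => P.Ds κ x j), P.contrA x k (fun j => α x j),
    P.contrB x, P.contrC x τ (fun j => P.Dv α x j k), P.contrC x τ (fun j => P.Dv α x k j),
    P.contrD x τ (fun l => β x l), P.contrD x β (fun l => β x l),
    P.contrD x τ (fun l => P.Dv β x k l),
    P.torqued_contract τ κ α β h α h.2.1 x k, P.torqued_contract τ κ α β h β h.2.2 x k,
    P.up_dot τ β x, h.2.2 x]
  ring
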